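/- Let X be a complete CAT(0) space, φ : ℝⁿ → X an isometric embedding with image E (an n-flat), and ρ : [0,∞) → X a geodesic ray with ρ(0) = φ(0). Assume that the Busemann function b_ρ(y) = lim_{t→∞} (d(y,ρ(t)) − t) is constant on E. Then the closed convex hull H of E ∪ ρ([0,∞)) is isometric to E × [0,∞): there is a bijection Φ : ℝⁿ × [0,∞) → H with Φ(v,0) = φ(v) for all v ∈ ℝⁿ, Φ(0,t) = ρ(t) for all t ≥ 0, and d(Φ(v,s), Φ(v',t))² = ‖v−v'‖² + (s−t)² for all v,v' ∈ ℝⁿ and s,t ≥ 0. -/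

import Mathlib

open Filter

/-- `m` is a midpoint of `x` and `y`. -/
def IsMidpoint {X : Type*} [MetricSpace X] (x y m : X) : Prop :=
  dist x m = dist x y / 2 ∧ dist y m = dist x y / 2

/-- A complete metric space is CAT(0) if midpoints exist and the
Bruhat–Tits inequality holds. -/
def IsCAT0 (X : Type*) [MetricSpace X] : Prop :=
  (∀ x y : X, ∃ m : X, IsMidpoint x y m) ∧
  ∀ x y z m : X, IsMidpoint x y m →
    dist z m ^ 2 ≤ dist z x ^ 2 / 2 + dist z y ^ 2 / 2 - dist x y ^ 2 / 4

/-- A subset is convex if it contains every midpoint of any two of its points. -/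
def ConvexSubset {X : Type*} [MetricSpace X] (C : Set X) : Prop :=
  ∀ x ∈ C, ∀ y ∈ C, ∀ m : X, IsMidpoint x y m → m ∈ C

/-- The closed convex hull of a subset: the intersection of all closed convex
subsets containing it. -/
def ClosedConvexHull {X : Type*} [MetricSpace X] (A : Set X) : Set X :=
  ⋂₀ {C : Set X | IsClosed C ∧ ConvexSubset C ∧ A ⊆ C}

/-- A geodesic ray in `X` (parametrized by nonnegative reals). -/
def IsGeodesicRay {X : Type*} [MetricSpace X] (ρ : ℝ → X) : Prop :=
  ∀ s t : ℝ, 0 ≤ s → 0 ≤ t → dist (ρ s) (ρ t) = |s - t|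

/-!
Model the half-flat by the closed half-space `{(v, t) | 0 ≤ t}` of the Euclidean space
`E × ℝ` and send `(v, t)` to the midpoint of `φ (2v)` and `ρ (2t)`. The hypothesis on the
Busemann function forces `E` and `ρ` to be orthogonal: `d(φ v, ρ t)² = ‖v‖² + t²`. Indeed
`t ↦ d(φ v, ρ t)² - t²` is midpoint convex along the ray and grows sublinearly, hence is bounded by
its value `‖v‖²` at `0`; the reverse inequality is Bruhat–Tits for `φ v`, `φ (-v)` and their
midpoint `ρ 0`.

In a Euclidean space the Bruhat–Tits inequality is Apollonius' identity, so comparing with the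
model turns upper bounds on two distances into an upper bound at a midpoint, and an exact value at a
midpoint into a lower bound at an endpoint. Upper bounds then spread from `E ∪ ρ` to the strip;
exact distances to `E` follow by reflecting in the flat, to `ρ` by reflecting along the ray and
doubling. Horizontal and vertical distances in the strip are bounded below by Busemann functions of
lines in `E` and of `ρ`, and a last reflection gives all distances. The image of the half-space is
then closed (it is complete) and convex, hence it is the closed convex hull of `E ∪ ρ`.
-/

open Topology WithLp RealInnerProductSpace

section InnerProductSpace

variable {F : Type*} [NormedAddCommGroup F] [InnerProductSpace ℝ F]

lemma dist_midpoint_sq (z x y : F) :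
    dist z (midpoint ℝ x y) ^ 2 = dist z x ^ 2 / 2 + dist z y ^ 2 / 2 - dist x y ^ 2 / 4 := by
  have := EuclideanGeometry.dist_sq_add_dist_sq_eq_two_mul_dist_midpoint_sq_add_half_dist_sq z x y
  linarith

lemma dist_smul_smul {e : F} (he : ‖e‖ = 1) (s t : ℝ) : dist (s • e) (t • e) = |s - t| := by
  rw [dist_eq_norm, ← sub_smul, norm_smul, he, mul_one, Real.norm_eq_abs]

lemma tendsto_sqrt_add_sq_sub {k : ℝ} (hk : 0 ≤ k) :
    Tendsto (fun x : ℝ => √(k + x ^ 2) - x) atTop (𝓝 0) := by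
  refine squeeze_zero' ?_ ?_ ((tendsto_const_nhds (x := k)).div_atTop tendsto_id)
  · filter_upwards [eventually_ge_atTop 0] with x hx
    have : x ≤ √(k + x ^ 2) := Real.le_sqrt_of_sq_le (by linarith)
    linarith
  · filter_upwards [eventually_gt_atTop 0] with x hx
    have hsq : (k / x + x) ^ 2 = k + x ^ 2 + (k + (k / x) ^ 2) := by field_simp; ring
    rw [id, sub_le_iff_le_add, Real.sqrt_le_left (by positivity), hsq]
    have : 0 ≤ (k / x) ^ 2 := sq_nonneg _
    linarith

lemma tendsto_norm_sub_smul_sub (y e : F) (he : ‖e‖ = 1) :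
    Tendsto (fun R : ℝ => ‖y - R • e‖ - R) atTop (𝓝 (-⟪y, e⟫)) := by
  set c := ⟪y, e⟫
  have hk : 0 ≤ ‖y‖ ^ 2 - c ^ 2 := by
    have := abs_real_inner_le_norm y e
    rw [he, mul_one] at this
    nlinarith [abs_nonneg c, sq_abs c]
  have hnorm : ∀ R : ℝ, ‖y - R • e‖ = √((‖y‖ ^ 2 - c ^ 2) + (R - c) ^ 2) := by
    intro R
    rw [← Real.sqrt_sq (norm_nonneg _), @norm_sub_sq_real, norm_smul, real_inner_smul_right,
      Real.norm_eq_abs, he]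
    congr 1
    nlinarith [sq_abs R]
  have := (tendsto_sqrt_add_sq_sub hk).comp (tendsto_atTop_add_const_right _ (-c) tendsto_id)
  rw [← zero_sub]
  refine (this.sub_const c).congr fun R => ?_
  simp only [Function.comp_apply, id, hnorm]
  ring_nf

lemma tendsto_dist_sub_dist_smul (p q e : F) (he : ‖e‖ = 1) :
    Tendsto (fun R : ℝ => dist p (R • e) - dist q (R • e)) atTop (𝓝 ⟪q - p, e⟫) := by
  have := (tendsto_norm_sub_smul_sub p e he).sub (tendsto_norm_sub_smul_sub q e he)
  rw [neg_sub_neg, ← inner_sub_left] at this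
  refine this.congr fun R => ?_
  simp only [dist_eq_norm]
  ring

end InnerProductSpace

section NormedSpace

variable {X E : Type*} [MetricSpace X] [NormedAddCommGroup E] [NormedSpace ℝ E]

lemma isMidpoint_midpoint (x y : E) : IsMidpoint x y (midpoint ℝ x y) := by
  simp [IsMidpoint, dist_left_midpoint, dist_right_midpoint, div_eq_inv_mul]

lemma midpoint_smul_smul (e : E) (s t : ℝ) :
    midpoint ℝ (s • e) (t • e) = ((s + t) / 2) • e := by
  rw [midpoint_eq_smul_add, invOf_eq_inv]
  module

lemma midpoint_two_smul_zero (v : E) : midpoint ℝ ((2 : ℝ) • v) 0 = v := by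
  rw [midpoint_eq_smul_add, invOf_eq_inv, add_zero, inv_smul_smul₀ two_ne_zero]

lemma WithLp.midpoint_toLp_mk (a b : E) (s t : ℝ) :
    midpoint ℝ (toLp 2 (a, s)) (toLp 2 (b, t)) = toLp 2 (midpoint ℝ a b, (s + t) / 2) := by
  simp only [midpoint_eq_smul_add, invOf_eq_inv, ← toLp_add, ← toLp_smul, Prod.smul_mk,
    Prod.mk_add_mk, smul_eq_mul]
  ring_nf

lemma midpoint_toLp_two_smul (p : WithLp 2 (E × ℝ)) :
    midpoint ℝ (toLp 2 ((2 : ℝ) • p.fst, 0)) (toLp 2 (0, 2 * p.snd)) = p := by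
  rw [WithLp.midpoint_toLp_mk, midpoint_two_smul_zero, zero_add,
    mul_div_cancel_left₀ _ two_ne_zero]
  rfl

lemma WithLp.toLp_zero_mk_eq_smul (s : ℝ) : toLp 2 ((0 : E), s) = s • toLp 2 (0, 1) := by
  rw [← toLp_smul, Prod.smul_mk, smul_zero, smul_eq_mul, mul_one]

lemma IsMidpoint.dist_eq_of_dist_eq {x y m : X} {x' y' : E} (hm : IsMidpoint x y m)
    (h : dist x y = dist x' y') :
    dist x m = dist x' (midpoint ℝ x' y') ∧ dist y m = dist y' (midpoint ℝ x' y') := by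
  rw [hm.1, hm.2, (isMidpoint_midpoint x' y').1, (isMidpoint_midpoint x' y').2, h]
  exact ⟨rfl, rfl⟩

lemma isMidpoint_of_dist_eq_dist_midpoint {x y m : X} {x' y' : E}
    (hx : dist x m = dist x' (midpoint ℝ x' y')) (hy : dist y m = dist y' (midpoint ℝ x' y'))
    (hxy : dist x y = dist x' y') : IsMidpoint x y m := by
  rw [IsMidpoint, hx, hy, hxy]
  exact isMidpoint_midpoint x' y'

lemma Isometry.isMidpoint {φ : E → X} (hφ : Isometry φ) (x y : E) :
    IsMidpoint (φ x) (φ y) (φ (midpoint ℝ x y)) := by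
  simpa only [IsMidpoint, hφ.dist_eq] using isMidpoint_midpoint x y

end NormedSpace

section WithLp

variable {X α β : Type*} [MetricSpace X] [SeminormedAddCommGroup α] [SeminormedAddCommGroup β]

lemma WithLp.prod_dist_sq_eq_of_L2 (x y : WithLp 2 (α × β)) :
    dist x y ^ 2 = dist x.fst y.fst ^ 2 + dist x.snd y.snd ^ 2 := by
  rw [prod_dist_eq_of_L2, Real.sq_sqrt (by positivity)]

lemma WithLp.prod_dist_of_snd_eq {x y : WithLp 2 (α × β)} (h : x.snd = y.snd) :
    dist x y = dist x.fst y.fst := by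
  simp [prod_dist_eq_of_L2, h, Real.sqrt_sq dist_nonneg]

lemma WithLp.prod_dist_of_fst_eq {x y : WithLp 2 (α × β)} (h : x.fst = y.fst) :
    dist x y = dist x.snd y.snd := by
  simp [prod_dist_eq_of_L2, h, Real.sqrt_sq dist_nonneg]

lemma WithLp.norm_toLp_zero_one : ‖toLp 2 ((0 : α), (1 : ℝ))‖ = 1 := by
  simp

lemma Isometry.dist_eq_dist_toLp {φ : α → X} (hφ : Isometry φ) (w w' : α) :
    dist (φ w) (φ w') = dist (toLp 2 (w, (0 : ℝ))) (toLp 2 (w', 0)) := by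
  rw [hφ.dist_eq]
  exact (WithLp.prod_dist_of_snd_eq (x := toLp 2 (w, (0 : ℝ))) (y := toLp 2 (w', 0)) rfl).symm

lemma IsGeodesicRay.dist_eq_dist_toLp {ρ : ℝ → X} (hρ : IsGeodesicRay ρ) {s t : ℝ}
    (hs : 0 ≤ s) (ht : 0 ≤ t) : dist (ρ s) (ρ t) = dist (toLp 2 ((0 : α), s)) (toLp 2 (0, t)) := by
  rw [hρ s t hs ht, ← Real.dist_eq]
  exact (WithLp.prod_dist_of_fst_eq (x := toLp 2 ((0 : α), s)) (y := toLp 2 (0, t)) rfl).symm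

end WithLp

section Metric

variable {X F : Type*} [MetricSpace X] [NormedAddCommGroup F] [InnerProductSpace ℝ F]

lemma IsGeodesicRay.isMidpoint {ρ : ℝ → X} (hρ : IsGeodesicRay ρ) {a b : ℝ} (ha : 0 ≤ a)
    (hb : 0 ≤ b) : IsMidpoint (ρ a) (ρ b) (ρ ((a + b) / 2)) := by
  have hab : 0 ≤ (a + b) / 2 := by linarith
  refine ⟨?_, ?_⟩ <;> rw [hρ _ _ ‹_› hab, hρ a b ha hb]
  · rw [show a - (a + b) / 2 = (a - b) / 2 by ring, abs_div, abs_two]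
  · rw [show b - (a + b) / 2 = -((a - b) / 2) by ring, abs_neg, abs_div, abs_two]

lemma IsGeodesicRay.tendsto_dist_sub {ρ : ℝ → X} (hρ : IsGeodesicRay ρ) :
    Tendsto (fun t => dist (ρ 0) (ρ t) - t) atTop (𝓝 0) := by
  refine tendsto_const_nhds.congr' ?_
  filter_upwards [eventually_ge_atTop 0] with t ht
  rw [hρ 0 t le_rfl ht, zero_sub, abs_neg, abs_of_nonneg ht, sub_self]

lemma inner_le_dist_of_dist_eq_smul {x z : X} {x' z' e : F} (he : ‖e‖ = 1) (w : ℝ → X)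
    (hx : ∀ R, 0 ≤ R → dist x (w R) = dist x' (R • e))
    (hz : ∀ R, 0 ≤ R → dist z (w R) = dist z' (R • e)) :
    ⟪x' - z', e⟫ ≤ dist x z := by
  refine le_of_tendsto (tendsto_dist_sub_dist_smul z' x' e he) ?_
  filter_upwards [eventually_ge_atTop 0] with R hR
  rw [← hx R hR, ← hz R hR]
  linarith [dist_triangle_left z (w R) x]

lemma closedConvexHull_subset {A C : Set X} (hC : IsClosed C) (hconv : ConvexSubset C)
    (hAC : A ⊆ C) : ClosedConvexHull A ⊆ C :=
  Set.sInter_subset_of_mem ⟨hC, hconv, hAC⟩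

lemma mem_closedConvexHull_of_isMidpoint {A : Set X} {x y m : X} (hx : x ∈ A) (hy : y ∈ A)
    (hm : IsMidpoint x y m) : m ∈ ClosedConvexHull A :=
  Set.mem_sInter.2 fun _ ⟨_, hconv, hAC⟩ => hconv x (hAC hx) y (hAC hy) m hm

end Metric

lemma le_of_midpoint_convex_of_tendsto_div {f : ℝ → ℝ}
    (hconv : ∀ s, 0 ≤ s → f s ≤ (f 0 + f (2 * s)) / 2)
    (hlim : Tendsto (fun T => f T / T) atTop (𝓝 0)) {t : ℝ} (ht : 0 ≤ t) : f t ≤ f 0 := by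
  have iter : ∀ k : ℕ, f t ≤ (1 - (2 ^ k)⁻¹) * f 0 + (2 ^ k)⁻¹ * f (2 ^ k * t) := by
    intro k
    induction k with
    | zero => simp
    | succ k ih =>
      have := hconv (2 ^ k * t) (by positivity)
      rw [← mul_assoc, ← pow_succ'] at this
      calc f t ≤ (1 - (2 ^ k)⁻¹) * f 0 + (2 ^ k)⁻¹ * f (2 ^ k * t) := ih
        _ ≤ (1 - (2 ^ k)⁻¹) * f 0 + (2 ^ k)⁻¹ * ((f 0 + f (2 ^ (k + 1) * t)) / 2) := by gcongr
        _ = _ := by rw [pow_succ]; ring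
  rcases ht.eq_or_lt with rfl | ht
  · exact le_rfl
  have hpow : Tendsto (fun k : ℕ => (2 : ℝ) ^ k) atTop atTop :=
    tendsto_pow_atTop_atTop_of_one_lt one_lt_two
  have hlim' : Tendsto (fun k : ℕ => (1 - (2 ^ k)⁻¹) * f 0 + t * (f (2 ^ k * t) / (2 ^ k * t)))
      atTop (𝓝 ((1 - 0) * f 0 + t * 0)) :=
    ((tendsto_const_nhds.sub hpow.inv_tendsto_atTop).mul_const _).add
      ((hlim.comp (hpow.atTop_mul_const ht)).const_mul t)
  rw [sub_zero, one_mul, mul_zero, add_zero] at hlim'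
  refine ge_of_tendsto hlim' (Eventually.of_forall fun k => (iter k).trans_eq ?_)
  field_simp

namespace IsCAT0

variable {X : Type*} [MetricSpace X] (hX : IsCAT0 X)
include hX

lemma isMidpoint_unique {x y m m' : X} (hm : IsMidpoint x y m) (hm' : IsMidpoint x y m') :
    m = m' := by
  have h := hX.2 x y m' m hm
  rw [dist_comm m' x, dist_comm m' y, hm'.1, hm'.2] at h
  exact (dist_le_zero.mp (by nlinarith [dist_nonneg (x := m') (y := m)])).symm

noncomputable def chooseMidpoint (x y : X) : X := (hX.1 x y).choose

lemma isMidpoint_chooseMidpoint (x y : X) : IsMidpoint x y (hX.chooseMidpoint x y) :=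
  (hX.1 x y).choose_spec

section Comparison

variable {F : Type*} [NormedAddCommGroup F] [InnerProductSpace ℝ F]

lemma dist_midpoint_le {x y m z : X} {x' y' z' : F} (hm : IsMidpoint x y m)
    (hxy : dist x' y' ≤ dist x y) (hx : dist z x ≤ dist z' x') (hy : dist z y ≤ dist z' y') :
    dist z m ≤ dist z' (midpoint ℝ x' y') := by
  have h := hX.2 x y z m hm
  have h' := dist_midpoint_sq z' x' y'
  refine (pow_le_pow_iff_left₀ dist_nonneg dist_nonneg two_ne_zero).mp ?_
  have := pow_le_pow_left₀ dist_nonneg hxy 2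
  have := pow_le_pow_left₀ dist_nonneg hx 2
  have := pow_le_pow_left₀ dist_nonneg hy 2
  linarith

lemma le_dist_of_isMidpoint {x y m z : X} {x' y' z' : F} (hm : IsMidpoint x y m)
    (hxy : dist x' y' ≤ dist x y) (hzm : dist z' (midpoint ℝ x' y') ≤ dist z m)
    (hy : dist z y ≤ dist z' y') : dist z' x' ≤ dist z x := by
  have h := hX.2 x y z m hm
  have h' := dist_midpoint_sq z' x' y'
  refine (pow_le_pow_iff_left₀ dist_nonneg dist_nonneg two_ne_zero).mp ?_
  have := pow_le_pow_left₀ dist_nonneg hxy 2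
  have := pow_le_pow_left₀ dist_nonneg hzm 2
  have := pow_le_pow_left₀ dist_nonneg hy 2
  linarith

variable {ρ : ℝ → X} (hρ : IsGeodesicRay ρ)
include hρ

lemma dist_ray_eq_of_le_of_eq {z : X} {z' e : F} (he : ‖e‖ = 1)
    (hle : ∀ s, 0 ≤ s → dist z (ρ s) ≤ dist z' (s • e)) {u : ℝ} (hu : 0 < u)
    (heq : dist z (ρ u) = dist z' (u • e)) {s : ℝ} (hs : 0 ≤ s) :
    dist z (ρ s) = dist z' (s • e) := by
  -- reflecting through `ρ u` propagates equality from `u` to `[0, 2u]`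
  have double : ∀ u, 0 ≤ u → dist z (ρ u) = dist z' (u • e) →
      ∀ s, 0 ≤ s → s ≤ 2 * u → dist z (ρ s) = dist z' (s • e) := by
    intro u hu heq s hs hsu
    have hm := hρ.isMidpoint hs (b := 2 * u - s) (by linarith)
    rw [show (s + (2 * u - s)) / 2 = u by ring] at hm
    refine (hle s hs).antisymm (hX.le_dist_of_isMidpoint hm ?_ ?_ (hle _ (by linarith)))
    · rw [dist_smul_smul he, hρ _ _ hs (by linarith)]
    · rw [midpoint_smul_smul, show (s + (2 * u - s)) / 2 = u by ring, heq]
  have pow_two_mul : ∀ k : ℕ, dist z (ρ (2 ^ k * u)) = dist z' ((2 ^ k * u) • e) := by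
    intro k
    induction k with
    | zero => simpa using heq
    | succ k ih => exact double _ (by positivity) ih _ (by positivity) (by rw [pow_succ]; linarith)
  obtain ⟨k, hk⟩ := pow_unbounded_of_one_lt (s / u) one_lt_two
  refine double _ (by positivity) (pow_two_mul k) s hs ?_
  have := (div_lt_iff₀ hu).mp hk
  nlinarith [pow_pos (two_pos (α := ℝ)) k]

lemma dist_sq_ray_sub_sq_le (z : X) {s : ℝ} (hs : 0 ≤ s) :
    dist z (ρ s) ^ 2 - s ^ 2 ≤
      ((dist z (ρ 0) ^ 2 - 0 ^ 2) + (dist z (ρ (2 * s)) ^ 2 - (2 * s) ^ 2)) / 2 := by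
  have hm := hρ.isMidpoint le_rfl (b := 2 * s) (by linarith)
  rw [show (0 + 2 * s) / 2 = s by ring] at hm
  have := hX.2 _ _ z _ hm
  rw [hρ 0 (2 * s) le_rfl (by linarith), zero_sub, abs_neg, abs_of_nonneg (by linarith)] at this
  linarith

lemma dist_sq_ray_le_of_tendsto {z : X} (hz : Tendsto (fun t => dist z (ρ t) - t) atTop (𝓝 0))
    {t : ℝ} (ht : 0 ≤ t) : dist z (ρ t) ^ 2 ≤ dist z (ρ 0) ^ 2 + t ^ 2 := by
  suffices dist z (ρ t) ^ 2 - t ^ 2 ≤ dist z (ρ 0) ^ 2 - 0 ^ 2 by linarith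
  refine le_of_midpoint_convex_of_tendsto_div (f := fun s => dist z (ρ s) ^ 2 - s ^ 2)
    (fun s hs => hX.dist_sq_ray_sub_sq_le hρ z hs) ?_ ht
  have hlim : Tendsto (fun T => (dist z (ρ T) - T) * (2 + (dist z (ρ T) - T) * T⁻¹)) atTop
      (𝓝 (0 * (2 + 0 * 0))) :=
    hz.mul (tendsto_const_nhds.add (hz.mul tendsto_inv_atTop_zero))
  rw [zero_mul] at hlim
  refine hlim.congr' ?_
  filter_upwards [eventually_gt_atTop 0] with T hT
  field_simp
  ring

end Comparison

end IsCAT0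

lemma IsCAT0.dist_flat_ray_eq_of_tendsto {X E : Type*} [MetricSpace X] [NormedAddCommGroup E]
    [InnerProductSpace ℝ E] (hX : IsCAT0 X) {φ : E → X} (hφ : Isometry φ) {ρ : ℝ → X}
    (hρ : IsGeodesicRay ρ) (hρ0 : ρ 0 = φ 0)
    (hbus : ∀ v, Tendsto (fun t => dist (φ v) (ρ t) - t) atTop (𝓝 0)) (w : E) {s : ℝ}
    (hs : 0 ≤ s) : dist (φ w) (ρ s) = dist (toLp 2 (w, 0)) (toLp 2 ((0 : E), s)) := by
  have upper : ∀ w, dist (φ w) (ρ s) ≤ dist (toLp 2 (w, 0)) (toLp 2 ((0 : E), s)) := by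
    intro w
    have := hX.dist_sq_ray_le_of_tendsto hρ (hbus w) hs
    rw [hρ0, hφ.dist_eq_dist_toLp w 0] at this
    refine (pow_le_pow_iff_left₀ dist_nonneg dist_nonneg two_ne_zero).mp (this.trans_eq ?_)
    simp [WithLp.prod_dist_sq_eq_of_L2]
  refine (upper w).antisymm ?_
  have hm := hφ.isMidpoint w (-w)
  rw [midpoint_self_neg, ← hρ0] at hm
  rw [dist_comm, dist_comm (φ w)]
  refine hX.le_dist_of_isMidpoint hm (hφ.dist_eq_dist_toLp w (-w)).ge ?_
    (by rw [dist_comm, dist_comm (toLp _ _)]; exact upper (-w))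
  rw [WithLp.midpoint_toLp_mk, midpoint_self_neg, add_zero, zero_div, dist_comm (ρ s),
    hρ.dist_eq_dist_toLp (α := E) le_rfl hs, dist_comm]

namespace IsCAT0

section

variable {X E : Type*} [MetricSpace X] [NormedAddCommGroup E] [NormedSpace ℝ E]

noncomputable def halfFlat (hX : IsCAT0 X) (φ : E → X) (ρ : ℝ → X) (p : WithLp 2 (E × ℝ)) : X :=
  hX.chooseMidpoint (φ ((2 : ℝ) • p.fst)) (ρ (2 * p.snd))

lemma isMidpoint_halfFlat (hX : IsCAT0 X) (φ : E → X) (ρ : ℝ → X) (p : WithLp 2 (E × ℝ)) :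
    IsMidpoint (φ ((2 : ℝ) • p.fst)) (ρ (2 * p.snd)) (hX.halfFlat φ ρ p) :=
  hX.isMidpoint_chooseMidpoint _ _

end

variable {X E : Type*} [MetricSpace X] [NormedAddCommGroup E] [InnerProductSpace ℝ E]
  (hX : IsCAT0 X) {φ : E → X} (hφ : Isometry φ) {ρ : ℝ → X} (hρ : IsGeodesicRay ρ)
  (hperp : ∀ w s, 0 ≤ s → dist (φ w) (ρ s) = dist (toLp 2 (w, 0)) (toLp 2 ((0 : E), s)))
include hperp

lemma dist_halfFlat_endpoints {p : WithLp 2 (E × ℝ)} (hp : 0 ≤ p.snd) :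
    dist (φ ((2 : ℝ) • p.fst)) (hX.halfFlat φ ρ p) = dist (toLp 2 ((2 : ℝ) • p.fst, 0)) p ∧
    dist (ρ (2 * p.snd)) (hX.halfFlat φ ρ p) = dist (toLp 2 (0, 2 * p.snd)) p := by
  have := (hX.isMidpoint_halfFlat φ ρ p).dist_eq_of_dist_eq (hperp _ _ (by linarith))
  rwa [midpoint_toLp_two_smul] at this

include hφ

lemma halfFlat_toLp_zero (w : E) : hX.halfFlat φ ρ (toLp 2 (w, 0)) = φ w := by
  have hρ0 : ρ 0 = φ 0 := by simpa [eq_comm] using hperp 0 0 le_rfl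
  refine hX.isMidpoint_unique (hX.isMidpoint_halfFlat φ ρ _) ?_
  simpa [hρ0, midpoint_two_smul_zero] using hφ.isMidpoint ((2 : ℝ) • w) 0

lemma dist_halfFlat_flat_le {p : WithLp 2 (E × ℝ)} (hp : 0 ≤ p.snd) (w : E) :
    dist (hX.halfFlat φ ρ p) (φ w) ≤ dist p (toLp 2 (w, 0)) := by
  have := hX.dist_midpoint_le (z' := toLp 2 (w, 0)) (hX.isMidpoint_halfFlat φ ρ p)
    (hperp _ _ (by linarith)).ge (hφ.dist_eq_dist_toLp w _).le (hperp w _ (by linarith)).le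
  rwa [midpoint_toLp_two_smul, dist_comm, dist_comm (toLp _ _)] at this

lemma dist_halfFlat_flat {p : WithLp 2 (E × ℝ)} (hp : 0 ≤ p.snd) (w : E) :
    dist (hX.halfFlat φ ρ p) (φ w) = dist p (toLp 2 (w, 0)) := by
  refine (hX.dist_halfFlat_flat_le hφ hperp hp w).antisymm ?_
  set w' := (4 : ℝ) • p.fst - w
  have hmid : midpoint ℝ w w' = (2 : ℝ) • p.fst := by
    rw [midpoint_eq_smul_add, invOf_eq_inv]; module
  have hm := hφ.isMidpoint w w'
  rw [hmid] at hm
  refine hX.le_dist_of_isMidpoint hm (hφ.dist_eq_dist_toLp w w').ge ?_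
    (hX.dist_halfFlat_flat_le hφ hperp hp w')
  rw [WithLp.midpoint_toLp_mk, hmid, add_zero, zero_div, dist_comm (hX.halfFlat φ ρ p),
    (hX.dist_halfFlat_endpoints hperp hp).1]
  exact (dist_comm _ _).le

include hρ

omit hφ in
lemma halfFlat_toLp_zero_left {s : ℝ} (hs : 0 ≤ s) :
    hX.halfFlat φ ρ (toLp 2 (0, s)) = ρ s := by
  have hρ0 : ρ 0 = φ 0 := by simpa [eq_comm] using hperp 0 0 le_rfl
  refine hX.isMidpoint_unique (hX.isMidpoint_halfFlat φ ρ _) ?_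
  simpa [← hρ0] using hρ.isMidpoint le_rfl (b := 2 * s) (by linarith)

omit hφ in
lemma dist_halfFlat_ray_le {p : WithLp 2 (E × ℝ)} (hp : 0 ≤ p.snd) {s : ℝ} (hs : 0 ≤ s) :
    dist (hX.halfFlat φ ρ p) (ρ s) ≤ dist p (toLp 2 (0, s)) := by
  have := hX.dist_midpoint_le (z' := toLp 2 (0, s)) (hX.isMidpoint_halfFlat φ ρ p)
    (hperp _ _ (by linarith)).ge (by rw [dist_comm, hperp _ _ hs, dist_comm])
    (hρ.dist_eq_dist_toLp hs (by linarith)).le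
  rwa [midpoint_toLp_two_smul, dist_comm, dist_comm (toLp _ _)] at this

lemma dist_halfFlat_ray {p : WithLp 2 (E × ℝ)} (hp : 0 ≤ p.snd) {s : ℝ} (hs : 0 ≤ s) :
    dist (hX.halfFlat φ ρ p) (ρ s) = dist p (toLp 2 (0, s)) := by
  rcases hp.eq_or_lt with hp0 | hp0
  · have hp' : p = toLp 2 (p.fst, 0) := by rw [hp0]; rfl
    rw [hp', hX.halfFlat_toLp_zero hφ hperp, hperp _ _ hs]
  rw [WithLp.toLp_zero_mk_eq_smul]
  refine hX.dist_ray_eq_of_le_of_eq hρ WithLp.norm_toLp_zero_one (fun s hs => ?_)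
    (by positivity : 0 < 2 * p.snd) ?_ hs
  · rw [← WithLp.toLp_zero_mk_eq_smul]; exact hX.dist_halfFlat_ray_le hρ hperp hp hs
  · rw [← WithLp.toLp_zero_mk_eq_smul, dist_comm, (hX.dist_halfFlat_endpoints hperp hp).2,
      dist_comm]

lemma dist_halfFlat_le {p q : WithLp 2 (E × ℝ)} (hp : 0 ≤ p.snd) (hq : 0 ≤ q.snd) :
    dist (hX.halfFlat φ ρ p) (hX.halfFlat φ ρ q) ≤ dist p q := by
  have := hX.dist_midpoint_le (z' := q) (hX.isMidpoint_halfFlat φ ρ p)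
    (hperp _ _ (by linarith)).ge (hX.dist_halfFlat_flat_le hφ hperp hq _)
    (hX.dist_halfFlat_ray_le hρ hperp hq (by linarith))
  rwa [midpoint_toLp_two_smul, dist_comm, dist_comm q] at this

lemma abs_snd_sub_le_dist_halfFlat {p q : WithLp 2 (E × ℝ)} (hp : 0 ≤ p.snd) (hq : 0 ≤ q.snd) :
    |p.snd - q.snd| ≤ dist (hX.halfFlat φ ρ p) (hX.halfFlat φ ρ q) := by
  have key : ∀ p q : WithLp 2 (E × ℝ), 0 ≤ p.snd → 0 ≤ q.snd →
      p.snd - q.snd ≤ dist (hX.halfFlat φ ρ p) (hX.halfFlat φ ρ q) := by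
    intro p q hp hq
    have := inner_le_dist_of_dist_eq_smul WithLp.norm_toLp_zero_one ρ
      (fun R hR => by rw [hX.dist_halfFlat_ray hφ hρ hperp hp hR, WithLp.toLp_zero_mk_eq_smul])
      (fun R hR => by rw [hX.dist_halfFlat_ray hφ hρ hperp hq hR, WithLp.toLp_zero_mk_eq_smul])
    simpa [WithLp.prod_inner_apply] using this
  exact abs_sub_le_iff.mpr ⟨key p q hp hq, dist_comm (hX.halfFlat φ ρ q) _ ▸ key q p hq hp⟩

omit hρ in
lemma norm_fst_sub_le_dist_halfFlat {p q : WithLp 2 (E × ℝ)} (hp : 0 ≤ p.snd) (hq : 0 ≤ q.snd) :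
    ‖p.fst - q.fst‖ ≤ dist (hX.halfFlat φ ρ p) (hX.halfFlat φ ρ q) := by
  rcases eq_or_ne (p.fst - q.fst) 0 with h | h
  · rw [h, norm_zero]; exact dist_nonneg
  set u := ‖p.fst - q.fst‖⁻¹ • (p.fst - q.fst)
  have hu : ‖u‖ = 1 := norm_smul_inv_norm h
  have hsmul : ∀ R : ℝ, toLp 2 (R • u, (0 : ℝ)) = R • toLp 2 (u, 0) := fun R => by
    rw [← toLp_smul, Prod.smul_mk, smul_zero]
  have := inner_le_dist_of_dist_eq_smul (e := toLp 2 (u, (0 : ℝ))) (by simpa using hu)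
    (fun R => φ (R • u))
    (fun R _ => by rw [hX.dist_halfFlat_flat hφ hperp hp, hsmul])
    (fun R _ => by rw [hX.dist_halfFlat_flat hφ hperp hq, hsmul])
  simpa [WithLp.prod_inner_apply, u, real_inner_smul_right, real_inner_self_eq_norm_sq,
    sq, h] using this

lemma dist_halfFlat_of_fst_eq {p q : WithLp 2 (E × ℝ)} (hp : 0 ≤ p.snd) (hq : 0 ≤ q.snd)
    (h : p.fst = q.fst) : dist (hX.halfFlat φ ρ p) (hX.halfFlat φ ρ q) = dist p q :=
  (hX.dist_halfFlat_le hφ hρ hperp hp hq).antisymm <| by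
    rw [WithLp.prod_dist_of_fst_eq h, Real.dist_eq]
    exact hX.abs_snd_sub_le_dist_halfFlat hφ hρ hperp hp hq

lemma dist_halfFlat_of_snd_eq {p q : WithLp 2 (E × ℝ)} (hp : 0 ≤ p.snd) (hq : 0 ≤ q.snd)
    (h : p.snd = q.snd) : dist (hX.halfFlat φ ρ p) (hX.halfFlat φ ρ q) = dist p q :=
  (hX.dist_halfFlat_le hφ hρ hperp hp hq).antisymm <| by
    rw [WithLp.prod_dist_of_snd_eq h, dist_eq_norm]
    exact hX.norm_fst_sub_le_dist_halfFlat hφ hperp hp hq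

lemma dist_halfFlat {p q : WithLp 2 (E × ℝ)} (hp : 0 ≤ p.snd) (hq : 0 ≤ q.snd) :
    dist (hX.halfFlat φ ρ p) (hX.halfFlat φ ρ q) = dist p q := by
  refine (hX.dist_halfFlat_le hφ hρ hperp hp hq).antisymm ?_
  set r : WithLp 2 (E × ℝ) := toLp 2 ((2 : ℝ) • q.fst - p.fst, p.snd)
  set m : WithLp 2 (E × ℝ) := toLp 2 (q.fst, p.snd)
  have hpr : midpoint ℝ p r = m := by
    change midpoint ℝ (toLp 2 (p.fst, p.snd)) r = m
    rw [WithLp.midpoint_toLp_mk, midpoint_eq_smul_add, invOf_eq_inv, add_self_div_two]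
    congr 2
    module
  have hm : IsMidpoint (hX.halfFlat φ ρ p) (hX.halfFlat φ ρ r) (hX.halfFlat φ ρ m) := by
    refine isMidpoint_of_dist_eq_dist_midpoint ?_ ?_
      (hX.dist_halfFlat_of_snd_eq hφ hρ hperp hp hp rfl) <;> rw [hpr]
    · exact hX.dist_halfFlat_of_snd_eq hφ hρ hperp hp hp rfl
    · exact hX.dist_halfFlat_of_snd_eq hφ hρ hperp hp hp rfl
  have := hX.le_dist_of_isMidpoint (z' := q) hm
    (hX.dist_halfFlat_of_snd_eq hφ hρ hperp (q := r) hp hp rfl).ge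
    (by rw [hpr]; exact (hX.dist_halfFlat_of_fst_eq hφ hρ hperp (q := m) hq hp rfl).ge)
    (hX.dist_halfFlat_le hφ hρ hperp hq hp)
  rwa [dist_comm, dist_comm (hX.halfFlat φ ρ q)] at this

lemma injOn_halfFlat : Set.InjOn (hX.halfFlat φ ρ) {p | 0 ≤ p.snd} := fun p hp q hq h =>
  dist_eq_zero.1 <| (hX.dist_halfFlat hφ hρ hperp hp hq).symm.trans (by rw [h, dist_self])

lemma convexSubset_image_halfFlat : ConvexSubset (hX.halfFlat φ ρ '' {p | 0 ≤ p.snd}) := by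
  rintro _ ⟨p, hp, rfl⟩ _ ⟨q, hq, rfl⟩ m hm
  have hpq : 0 ≤ (midpoint ℝ p q).snd := by
    change 0 ≤ (midpoint ℝ (toLp 2 (p.fst, p.snd)) (toLp 2 (q.fst, q.snd))).snd
    rw [WithLp.midpoint_toLp_mk]
    exact div_nonneg (add_nonneg hp hq) zero_le_two
  refine ⟨midpoint ℝ p q, hpq, hX.isMidpoint_unique ?_ hm⟩
  exact isMidpoint_of_dist_eq_dist_midpoint (hX.dist_halfFlat hφ hρ hperp hp hpq)
    (hX.dist_halfFlat hφ hρ hperp hq hpq) (hX.dist_halfFlat hφ hρ hperp hp hq)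

lemma isClosed_image_halfFlat [CompleteSpace E] :
    IsClosed (hX.halfFlat φ ρ '' {p | 0 ≤ p.snd}) := by
  have hK : IsClosed {p : WithLp 2 (E × ℝ) | 0 ≤ p.snd} :=
    isClosed_le continuous_const (WithLp.continuous_snd 2 E ℝ)
  have : CompleteSpace {p : WithLp 2 (E × ℝ) | 0 ≤ p.snd} := hK.completeSpace_coe
  have hiso : Isometry (Set.domRestrict {p | 0 ≤ p.snd} (hX.halfFlat φ ρ)) :=
    Isometry.of_dist_eq fun p q => hX.dist_halfFlat hφ hρ hperp p.2 q.2
  rw [Set.image_eq_range]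
  exact hiso.isClosedEmbedding.isClosed_range

lemma closedConvexHull_eq_image_halfFlat [CompleteSpace E] :
    ClosedConvexHull (Set.range φ ∪ ρ '' Set.Ici 0) = hX.halfFlat φ ρ '' {p | 0 ≤ p.snd} := by
  refine (closedConvexHull_subset (hX.isClosed_image_halfFlat hφ hρ hperp)
    (hX.convexSubset_image_halfFlat hφ hρ hperp) ?_).antisymm ?_
  · rintro _ (⟨w, rfl⟩ | ⟨s, hs, rfl⟩)
    · exact ⟨toLp 2 (w, 0), le_refl (0 : ℝ), hX.halfFlat_toLp_zero hφ hperp w⟩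
    · exact ⟨toLp 2 (0, s), hs, hX.halfFlat_toLp_zero_left hρ hperp hs⟩
  · rintro _ ⟨p, hp, rfl⟩
    exact mem_closedConvexHull_of_isMidpoint (Or.inl ⟨_, rfl⟩)
      (Or.inr ⟨_, Set.mem_Ici.2 (mul_nonneg zero_le_two hp), rfl⟩) (hX.isMidpoint_halfFlat φ ρ p)

end IsCAT0

theorem stmt10_general {X : Type*} [MetricSpace X] (hX : IsCAT0 X)
    {n : ℕ} (φ : EuclideanSpace ℝ (Fin n) → X) (hφ : Isometry φ)
    (ρ : ℝ → X) (hρ : IsGeodesicRay ρ) (hρ0 : ρ 0 = φ 0)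
    -- the Busemann function of `ρ` is constant on `E = range φ`
    (hbus : ∃ c : ℝ, ∀ v : EuclideanSpace ℝ (Fin n),
      Tendsto (fun t : ℝ => dist (φ v) (ρ t) - t) atTop (nhds c))
    -- `H` is the closed convex hull of `E ∪ ρ([0,∞))`
    (H : Set X) (hH : H = ClosedConvexHull (Set.range φ ∪ ρ '' Set.Ici 0)) :
    ∃ Φ : EuclideanSpace ℝ (Fin n) → ℝ → X,
      (∀ v : EuclideanSpace ℝ (Fin n), ∀ t : ℝ, 0 ≤ t → Φ v t ∈ H) ∧
      (∀ h ∈ H, ∃! p : EuclideanSpace ℝ (Fin n) × ℝ, 0 ≤ p.2 ∧ Φ p.1 p.2 = h) ∧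
      (∀ v : EuclideanSpace ℝ (Fin n), Φ v 0 = φ v) ∧
      (∀ t : ℝ, 0 ≤ t → Φ 0 t = ρ t) ∧
      (∀ v v' : EuclideanSpace ℝ (Fin n), ∀ s t : ℝ, 0 ≤ s → 0 ≤ t →
        dist (Φ v s) (Φ v' t) ^ 2 = ‖v - v'‖ ^ 2 + (s - t) ^ 2) := by
  obtain ⟨c, hc⟩ := hbus
  obtain rfl : c = 0 := tendsto_nhds_unique (hc 0) (hρ0 ▸ hρ.tendsto_dist_sub)
  have hperp := fun w s hs => hX.dist_flat_ray_eq_of_tendsto hφ hρ hρ0 hc w (s := s) hs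
  rw [hX.closedConvexHull_eq_image_halfFlat hφ hρ hperp] at hH
  subst hH
  refine ⟨fun v t => hX.halfFlat φ ρ (toLp 2 (v, t)), fun v t ht => ⟨_, ht, rfl⟩, ?_,
    hX.halfFlat_toLp_zero hφ hperp, fun t ht => hX.halfFlat_toLp_zero_left hρ hperp ht, ?_⟩
  · rintro _ ⟨p, hp, rfl⟩
    exact ⟨ofLp p, ⟨hp, rfl⟩, fun q ⟨hq, hqp⟩ =>
      congrArg ofLp (hX.injOn_halfFlat hφ hρ hperp hq hp hqp)⟩
  · intro v v' s t hs ht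
    rw [hX.dist_halfFlat hφ hρ hperp (p := toLp 2 (v, s)) (q := toLp 2 (v', t)) hs ht,
      WithLp.prod_dist_sq_eq_of_L2]
    simp [dist_eq_norm, sq_abs]

theorem stmt10 {X : Type*} [MetricSpace X] [CompleteSpace X] (hX : IsCAT0 X)
    {n : ℕ} (φ : EuclideanSpace ℝ (Fin n) → X) (hφ : Isometry φ)
    (ρ : ℝ → X) (hρ : IsGeodesicRay ρ) (hρ0 : ρ 0 = φ 0)
    -- the Busemann function of `ρ` is constant on `E = range φ`
    (hbus : ∃ c : ℝ, ∀ v : EuclideanSpace ℝ (Fin n),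
      Tendsto (fun t : ℝ => dist (φ v) (ρ t) - t) atTop (nhds c))
    -- `H` is the closed convex hull of `E ∪ ρ([0,∞))`
    (H : Set X) (hH : H = ClosedConvexHull (Set.range φ ∪ ρ '' Set.Ici 0)) :
    ∃ Φ : EuclideanSpace ℝ (Fin n) → ℝ → X,
      (∀ v : EuclideanSpace ℝ (Fin n), ∀ t : ℝ, 0 ≤ t → Φ v t ∈ H) ∧
      (∀ h ∈ H, ∃! p : EuclideanSpace ℝ (Fin n) × ℝ, 0 ≤ p.2 ∧ Φ p.1 p.2 = h) ∧
      (∀ v : EuclideanSpace ℝ (Fin n), Φ v 0 = φ v) ∧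
      (∀ t : ℝ, 0 ≤ t → Φ 0 t = ρ t) ∧
      (∀ v v' : EuclideanSpace ℝ (Fin n), ∀ s t : ℝ, 0 ≤ s → 0 ≤ t →
        dist (Φ v s) (Φ v' t) ^ 2 = ‖v - v'‖ ^ 2 + (s - t) ^ 2) :=
  stmt10_general hX φ hφ ρ hρ hρ0 hbus H hH
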